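/- arXiv:1611.03705 — 6 statements merged into one kernel-verified Lean document; each statement's English description precedes it below -/
import Mathlib

section
/- For every natural number n, the 2-adic valuation of the n-th Catalan number equals the binary digit sum of α(n); that is, ν₂(Cₙ) = d(α(n)). -/
/-- Binary digit sum: the sum of the digits of `n` in base 2. -/
def binaryDigitSum (n : ℕ) : ℕ := (Nat.digits 2 n).sum

/-- `α(n) = (CF₂(n+1) − 1)/2` where `CF₂(m) = m / 2^{ν₂(m)}` is the odd cofactor. -/
def alphaFn (n : ℕ) : ℕ := ((n + 1) / 2 ^ padicValNat 2 (n + 1) - 1) / 2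

/-- d(2x) = d(x) -/
lemma ds_two_mul (x : ℕ) : binaryDigitSum (2 * x) = binaryDigitSum x := by
  rcases Nat.eq_zero_or_pos x with h | h
  · simp [h, binaryDigitSum]
  · unfold binaryDigitSum
    rw [Nat.digits_def' (by norm_num) (by omega)]
    simp [Nat.mul_div_cancel_left, Nat.mul_mod_right]

lemma ds_two_mul_add_one (x : ℕ) : binaryDigitSum (2 * x + 1) = binaryDigitSum x + 1 := by
  unfold binaryDigitSum
  rw [Nat.digits_def' (by norm_num) (by omega)]
  have h1 : (2 * x + 1) % 2 = 1 := by omega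
  have h2 : (2 * x + 1) / 2 = x := by omega
  rw [h1, h2]; simp [add_comm]

lemma ds_pow_mul (k x : ℕ) : binaryDigitSum (2 ^ k * x) = binaryDigitSum x := by
  induction k with
  | zero => simp
  | succ k ih => rw [pow_succ, mul_comm (2^k) 2, mul_assoc, ds_two_mul, ih]

/-- d(n) + 1 = d(n+1) + ν₂(n+1) -/
lemma ds_succ (n : ℕ) : binaryDigitSum n + 1 = binaryDigitSum (n + 1) + padicValNat 2 (n + 1) := by
  induction n using Nat.strong_induction_on with
  | _ n ih =>
    rcases Nat.even_or_odd n with ⟨j, hj⟩ | ⟨j, hj⟩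
    · subst hj
      have hodd : ¬ 2 ∣ (j + j + 1) := by omega
      have : padicValNat 2 (j + j + 1) = 0 := padicValNat.eq_zero_of_not_dvd hodd
      rw [this, add_zero]
      have : j + j + 1 = 2 * j + 1 := by ring
      rw [this, ds_two_mul_add_one]
      have : j + j = 2 * j := by ring
      rw [this, ds_two_mul]
    · subst hj
      have h1 : 2 * j + 1 + 1 = 2 * (j + 1) := by ring
      rw [ds_two_mul_add_one, h1, ds_two_mul]
      have hv : padicValNat 2 (2 * (j + 1)) = padicValNat 2 (j + 1) + 1 := by
        rw [padicValNat.mul (by norm_num) (by omega), padicValNat.self (by norm_num)]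
        omega
      rw [hv]
      have := ih j (by omega)
      omega

/-- ν₂(Cₙ) = d(α(n)). -/
theorem catalan_two_adic_val (n : ℕ) :
    padicValNat 2 (catalan n) = binaryDigitSum (alphaFn n) := by
  haveI : Fact (Nat.Prime 2) := ⟨by norm_num⟩
  -- valuation of central binomial = d(n)
  have hcb : padicValNat 2 (Nat.centralBinom n) = binaryDigitSum n := by
    have h := sub_one_mul_padicValNat_choose_eq_sub_sum_digits' (p := 2) (k := n) (n := n)
    have h2n : n + n = 2 * n := by ring
    rw [h2n] at h
    have : (Nat.digits 2 (2 * n)).sum = binaryDigitSum n := ds_two_mul n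
    unfold Nat.centralBinom
    simp only [binaryDigitSum] at *
    omega
  -- valuation of catalan
  have hc : padicValNat 2 (Nat.centralBinom n)
      = padicValNat 2 (n + 1) + padicValNat 2 (catalan n) := by
    have hcne : catalan n ≠ 0 := by
      intro h
      have h2 := succ_mul_catalan_eq_centralBinom n
      have h3 := n.centralBinom_pos
      rw [h, mul_zero] at h2
      omega
    rw [← succ_mul_catalan_eq_centralBinom, padicValNat.mul (by omega) hcne]
  -- RHS: d(alpha n) = d(n+1) - 1
  set k := padicValNat 2 (n + 1) with hk
  have hdvd : 2 ^ k ∣ (n + 1) := pow_padicValNat_dvd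
  set q := (n + 1) / 2 ^ k with hq
  have hmq : n + 1 = 2 ^ k * q := (Nat.mul_div_cancel' hdvd).symm
  have hqodd : ¬ 2 ∣ q := by
    intro ⟨c, hc2⟩
    have : 2 ^ (k + 1) ∣ (n + 1) := by
      rw [hmq, hc2, pow_succ]; exact ⟨c, by ring⟩
    exact pow_succ_padicValNat_not_dvd (by omega) this
  have hqpos : 0 < q := by
    rcases Nat.eq_zero_or_pos q with h | h
    · rw [h, mul_zero] at hmq; omega
    · exact h
  obtain ⟨a, ha⟩ : ∃ a, q = 2 * a + 1 := ⟨q / 2, by omega⟩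
  have halpha : alphaFn n = a := by
    unfold alphaFn
    rw [← hk, ← hq, ha]; omega
  have hdq : binaryDigitSum q = binaryDigitSum a + 1 := by rw [ha, ds_two_mul_add_one]
  have hdm : binaryDigitSum (n + 1) = binaryDigitSum q := by rw [hmq, ds_pow_mul]
  have hds := ds_succ n
  rw [halpha]
  omega
end

section
/- For natural numbers n and k with k ≥ 1, the Catalan number Cₙ is congruent to 2^{k−1} modulo 2^k if and only if d(α(n)) = k − 1. -/
-- digit sum of 2*x equals digit sum of x
lemma dsum_two_mul (x : ℕ) : (Nat.digits 2 (2 * x)).sum = (Nat.digits 2 x).sum := by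
  rcases Nat.eq_zero_or_pos x with h | h
  · simp [h]
  · rw [Nat.digits_def' (by norm_num) (by omega)]
    simp [Nat.mul_div_cancel_left x (by norm_num : 0 < 2)]

lemma dsum_pow_mul (v x : ℕ) : (Nat.digits 2 (2 ^ v * x)).sum = (Nat.digits 2 x).sum := by
  induction v with
  | zero => simp
  | succ v ih =>
    have : 2 ^ (v + 1) * x = 2 * (2 ^ v * x) := by ring
    rw [this, dsum_two_mul, ih]

-- for odd m, d(m) = d((m-1)/2) + 1
lemma dsum_odd (m : ℕ) (hm : m % 2 = 1) :
    (Nat.digits 2 m).sum = (Nat.digits 2 ((m - 1) / 2)).sum + 1 := by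
  have h1 : 0 < m := by omega
  rw [Nat.digits_def' (by norm_num) h1]
  have : m / 2 = (m - 1) / 2 := by omega
  simp [hm, this, Nat.add_comm]

-- key identity: d(n) + 1 = d(n+1) + ν₂(n+1)
lemma dsum_succ (n : ℕ) :
    (Nat.digits 2 n).sum + 1 = (Nat.digits 2 (n + 1)).sum + padicValNat 2 (n + 1) := by
  induction n using Nat.strong_induction_on with
  | _ n ih =>
    rcases Nat.eq_zero_or_pos n with h | h
    · simp [h]
    rcases Nat.even_or_odd n with ⟨q, hq⟩ | ⟨q, hq⟩
    · -- n = 2q, n+1 odd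
      have hodd : (n + 1) % 2 = 1 := by omega
      have hv : padicValNat 2 (n + 1) = 0 :=
        padicValNat.eq_zero_of_not_dvd (by omega)
      rw [hv, dsum_odd (n + 1) hodd]
      have : (n + 1 - 1) / 2 = q := by omega
      rw [this]
      have : n = 2 * q := by omega
      rw [this, dsum_two_mul]
    · -- n = 2q+1, n+1 = 2(q+1)
      have hq1 : n + 1 = 2 * (q + 1) := by omega
      have hlt : q < n := by omega
      have hv : padicValNat 2 (n + 1) = padicValNat 2 (q + 1) + 1 := by
        rw [hq1, padicValNat.mul (by norm_num) (by omega),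
          padicValNat.self (by norm_num)]
        ring
      have hdn : (Nat.digits 2 n).sum = (Nat.digits 2 q).sum + 1 := by
        have h2 : (n - 1) / 2 = q := by omega
        rw [dsum_odd n (by omega), h2]
      have hd1 : (Nat.digits 2 (n + 1)).sum = (Nat.digits 2 (q + 1)).sum := by
        rw [hq1, dsum_two_mul]
      have := ih q hlt
      omega

-- d(α(n)) + ν₂(n+1) = d(n)
lemma dsum_alpha (n : ℕ) :
    binaryDigitSum (alphaFn n) + padicValNat 2 (n + 1) = (Nat.digits 2 n).sum := by
  set v := padicValNat 2 (n + 1) with hv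
  set m := (n + 1) / 2 ^ v with hm
  have hfact : (n + 1).factorization 2 = v := Nat.factorization_def _ (by norm_num)
  have hmul : 2 ^ v * m = n + 1 := by
    have := Nat.ordProj_mul_ordCompl_eq_self (n + 1) 2
    rwa [hfact] at this
  have hmodd : ¬ 2 ∣ m := by
    have := Nat.not_dvd_ordCompl Nat.prime_two (show n + 1 ≠ 0 by omega)
    rwa [hfact] at this
  have hm1 : m % 2 = 1 := by omega
  have h1 : (Nat.digits 2 (n + 1)).sum = binaryDigitSum (alphaFn n) + 1 := by
    rw [← hmul, dsum_pow_mul, dsum_odd m hm1]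
    rfl
  have h2 := dsum_succ n
  omega

lemma catalan_ne_zero (n : ℕ) : catalan n ≠ 0 := by
  intro h
  have hc : (n + 1) * catalan n = n.centralBinom := succ_mul_catalan_eq_centralBinom n
  rw [h, mul_zero] at hc
  have := n.centralBinom_pos
  omega

-- ν₂(catalan n) + ν₂(n+1) = d(n)
lemma val_catalan (n : ℕ) :
    padicValNat 2 (catalan n) + padicValNat 2 (n + 1) = (Nat.digits 2 n).sum := by
  have hc : (n + 1) * catalan n = n.centralBinom := succ_mul_catalan_eq_centralBinom n
  have hcat : catalan n ≠ 0 := catalan_ne_zero n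
  have hval : padicValNat 2 (n + 1) + padicValNat 2 (catalan n)
      = padicValNat 2 n.centralBinom := by
    rw [← hc, padicValNat.mul (by omega) hcat]
  have hkum : padicValNat 2 n.centralBinom = (Nat.digits 2 n).sum := by
    have h2 : (Nat.digits 2 (2 * n)).sum = (Nat.digits 2 n).sum := dsum_two_mul n
    haveI : Fact (Nat.Prime 2) := ⟨Nat.prime_two⟩
    have := sub_one_mul_padicValNat_choose_eq_sub_sum_digits (p := 2) (k := n) (n := 2 * n)
      (by omega)
    rw [Nat.centralBinom]
    have h3 : 2 * n - n = n := by omega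
    rw [h3, h2] at this
    omega
  omega

-- modular characterization via valuation
lemma modeq_iff_val (m k : ℕ) (hm : m ≠ 0) (hk : 1 ≤ k) :
    m ≡ 2 ^ (k - 1) [MOD 2 ^ k] ↔ padicValNat 2 m = k - 1 := by
  constructor
  · intro h
    have hlt : 2 ^ (k - 1) < 2 ^ k := Nat.pow_lt_pow_right (by norm_num) (by omega)
    have h' : m % 2 ^ k = 2 ^ (k - 1) := by
      have := h.symm
      unfold Nat.ModEq at this
      rw [Nat.mod_eq_of_lt hlt] at this
      omega
    obtain ⟨q, hq⟩ : ∃ q, m = 2 ^ k * q + 2 ^ (k - 1) :=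
      ⟨m / 2 ^ k, by have := Nat.div_add_mod m (2 ^ k); omega⟩
    have hk' : 2 ^ k = 2 ^ (k - 1) * 2 := by
      rw [← pow_succ]; congr 1; omega
    have hq2 : m = 2 ^ (k - 1) * (2 * q + 1) := by rw [hq, hk']; ring
    rw [hq2, padicValNat.mul (by positivity) (by omega),
      padicValNat.prime_pow, padicValNat.eq_zero_of_not_dvd (by omega)]
    omega
  · intro h
    obtain ⟨u, hu, hmu⟩ : ∃ u, ¬ 2 ∣ u ∧ m = 2 ^ (k - 1) * u := by
      refine ⟨m / 2 ^ padicValNat 2 m, ?_, ?_⟩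
      · have := Nat.not_dvd_ordCompl Nat.prime_two hm
        rwa [Nat.factorization_def _ (by norm_num)] at this
      · rw [← h]
        have := Nat.ordProj_mul_ordCompl_eq_self m 2
        rw [Nat.factorization_def _ (by norm_num)] at this
        omega
    obtain ⟨t, ht⟩ : ∃ t, u = 2 * t + 1 := ⟨u / 2, by omega⟩
    have hk' : 2 ^ k = 2 ^ (k - 1) * 2 := by
      rw [← pow_succ]; congr 1; omega
    have : m = 2 ^ k * t + 2 ^ (k - 1) := by rw [hmu, ht, hk']; ring
    have hlt : 2 ^ (k - 1) < 2 ^ k := Nat.pow_lt_pow_right (by norm_num) (by omega)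
    rw [this]
    unfold Nat.ModEq
    rw [Nat.mul_add_mod, Nat.mod_eq_of_lt hlt]

/-- For `k ≥ 1`, `Cₙ ≡ 2^{k−1} (mod 2^k)` iff `d(α(n)) = k − 1`. -/
theorem catalan_modEq_half_pow_two_iff (n k : ℕ) (hk : 1 ≤ k) :
    catalan n ≡ 2 ^ (k - 1) [MOD 2 ^ k] ↔ binaryDigitSum (alphaFn n) = k - 1 := by
  rw [modeq_iff_val _ _ (catalan_ne_zero n) hk]
  have h1 := dsum_alpha n
  have h2 := val_catalan n
  omega
end

section
/- For natural numbers t and k with k ≥ 1, the number of natural numbers n < 2^t satisfying d(α(n)) = k equals the binomial coefficient binomial(t, k+1). -/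
open Finset

theorem binaryDigitSum_eq_length_bitIndices (n : ℕ) :
    binaryDigitSum n = n.bitIndices.length := by
  induction n using Nat.binaryRec with
  | zero => simp [binaryDigitSum]
  | bit b n ih =>
    rcases b with _ | _
    · rcases n.eq_zero_or_pos with rfl | hn
      · simp [binaryDigitSum]
      · simp [binaryDigitSum, Nat.digits_base_mul one_lt_two hn, ← ih]
    · rw [Nat.bit_true, Nat.bitIndices_two_mul_add_one, binaryDigitSum,
        Nat.digits_def' one_lt_two (2 * n).succ_pos, show (2 * n + 1) / 2 = n by omega]
      simp [← ih, binaryDigitSum, add_comm]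

theorem lt_two_pow_iff_toFinset_bitIndices_subset {n t : ℕ} :
    n < 2 ^ t ↔ n.bitIndices.toFinset ⊆ range t := by
  constructor
  · intro hn i hi
    rw [List.mem_toFinset] at hi
    exact mem_range.2 ((Nat.pow_lt_pow_iff_right one_lt_two).1
      ((Nat.two_pow_le_of_mem_bitIndices hi).trans_lt hn))
  · intro hs
    rw [← sum_toFinset_bitIndices_two_pow n]
    exact Nat.geomSum_lt le_rfl fun i hi => mem_range.1 (hs hi)

theorem card_filter_binaryDigitSum_eq (t j : ℕ) :
    #{n ∈ range (2 ^ t) | binaryDigitSum n = j} = t.choose j := by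
  have : {n ∈ range (2 ^ t) | binaryDigitSum n = j} =
      (powersetCard j (range t)).map equivBitIndices.symm.toEmbedding := by
    ext n
    simp [mem_map_equiv, mem_powersetCard, lt_two_pow_iff_toFinset_bitIndices_subset,
      binaryDigitSum_eq_length_bitIndices, List.toFinset_card_of_nodup Nat.bitIndices_nodup]
  rw [this, card_map, card_powersetCard, card_range]

theorem two_pow_padicValNat_mul_two_mul_alphaFn_add_one (n : ℕ) :
    2 ^ padicValNat 2 (n + 1) * (2 * alphaFn n + 1) = n + 1 := by
  unfold alphaFn
  have hdvd : 2 ^ padicValNat 2 (n + 1) ∣ n + 1 := pow_padicValNat_dvd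
  have hmax := pow_succ_padicValNat_not_dvd (p := 2) (n.add_one_ne_zero)
  generalize padicValNat 2 (n + 1) = v at *
  obtain ⟨m, hm⟩ := hdvd
  have hodd : m % 2 = 1 := by
    by_contra h
    apply hmax
    rw [hm, pow_succ]
    exact mul_dvd_mul_left _ (Nat.dvd_of_mod_eq_zero (show m % 2 = 0 by omega))
  rw [hm, Nat.mul_div_cancel_left _ (by positivity)]
  congr 1
  omega

theorem binaryDigitSum_alphaFn_add_one (n : ℕ) :
    binaryDigitSum (alphaFn n) + 1 = binaryDigitSum (n + 1) := by
  rw [← two_pow_padicValNat_mul_two_mul_alphaFn_add_one n]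
  simp [binaryDigitSum_eq_length_bitIndices]

/-- `#{n < 2^t : d(α(n)) = k} = C(t, k+1)`. -/
theorem card_dAlpha_eq (t k : ℕ) (hk : 1 ≤ k) :
    {n : ℕ | n < 2 ^ t ∧ binaryDigitSum (alphaFn n) = k}.ncard = t.choose (k + 1) := by
  have hzero : binaryDigitSum 0 = 0 := rfl
  have htwoPow : binaryDigitSum (2 ^ t) = 1 := by simp [binaryDigitSum_eq_length_bitIndices]
  have hshift : (· + 1) '' {n : ℕ | n < 2 ^ t ∧ binaryDigitSum (alphaFn n) = k} =
      ↑{m ∈ range (2 ^ t) | binaryDigitSum m = k + 1} := by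
    ext m
    simp only [Set.mem_image, Set.mem_ofPred_eq, coe_filter, mem_range]
    constructor
    · rintro ⟨n, ⟨hn, hd⟩, rfl⟩
      have hd' := binaryDigitSum_alphaFn_add_one n
      refine ⟨lt_of_le_of_ne hn fun h => ?_, by omega⟩
      rw [h] at hd'
      omega
    · rintro ⟨hm, hd⟩
      obtain ⟨n, rfl⟩ : ∃ n, m = n + 1 := Nat.exists_eq_succ_of_ne_zero (by rintro rfl; omega)
      exact ⟨n, ⟨by omega, by have := binaryDigitSum_alphaFn_add_one n; omega⟩, rfl⟩
  rw [← Set.ncard_image_of_injective _ (add_left_injective 1), hshift, Set.ncard_coe_finset,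
    card_filter_binaryDigitSum_eq]
end

section
/- For every natural number n: if n + 1 ∈ T*(01), then the Catalan number Cₙ satisfies Cₙ ≡ (−1)^{d₃*(n+1)} (mod 3); otherwise, Cₙ ≡ 0 (mod 3). -/
/-- `T*(01)`: natural numbers all of whose base-3 digits with index `≥ 1`
are `0` or `1`. -/
def Tstar01 : Set ℕ := {n | ∀ i, 1 ≤ i → n / 3 ^ i % 3 = 0 ∨ n / 3 ^ i % 3 = 1}

/-- `d₃*(n)`: the number of indices `i ≥ 1` whose base-3 digit of `n` is `1`. -/
def d3star (n : ℕ) : ℕ := ((Nat.digits 3 n).drop 1).count 1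


instance : Fact (Nat.Prime 3) := ⟨by norm_num⟩

/-- one-step Lucas in `ZMod 3` -/
lemma lucas3 (n k : ℕ) : ((n.choose k : ZMod 3)) =
    ((n % 3).choose (k % 3) : ZMod 3) * ((n / 3).choose (k / 3) : ZMod 3) := by
  have h := Choose.choose_modEq_choose_mod_mul_choose_div (n := n) (k := k) (p := 3)
  have := (ZMod.intCast_eq_intCast_iff _ _ _).mpr h
  push_cast at this
  exact_mod_cast this

lemma g_two (j : ℕ) : ∀ t : ℕ, t / 3 ^ j % 3 = 2 → ((2 * t).choose t : ZMod 3) = 0 := by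
  induction j with
  | zero =>
    intro t h
    simp only [pow_zero, Nat.div_one] at h
    rw [lucas3]
    have h1 : 2 * t % 3 = 1 := by omega
    rw [h1, h]
    norm_num
  | succ j ih =>
    intro t h
    have hd : t / 3 / 3 ^ j = t / 3 ^ (j + 1) := by
      rw [Nat.div_div_eq_div_mul, ← pow_succ']
    have ha : ((2 * (t / 3)).choose (t / 3) : ZMod 3) = 0 := ih (t / 3) (by rw [hd]; exact h)
    rw [lucas3]
    have hb : t % 3 = 0 ∨ t % 3 = 1 ∨ t % 3 = 2 := by omega
    rcases hb with hb | hb | hb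
    · have h1 : 2 * t % 3 = 0 := by omega
      have h2 : 2 * t / 3 = 2 * (t / 3) := by omega
      rw [h1, hb, h2, ha, mul_zero]
    · have h1 : 2 * t % 3 = 2 := by omega
      have h2 : 2 * t / 3 = 2 * (t / 3) := by omega
      rw [h1, hb, h2, ha, mul_zero]
    · have h1 : 2 * t % 3 = 1 := by omega
      rw [h1, hb]
      norm_num

lemma g_ones : ∀ t : ℕ, (∀ j, t / 3 ^ j % 3 ≠ 2) →
    ((2 * t).choose t : ZMod 3) = (-1) ^ ((Nat.digits 3 t).count 1) := by
  intro t
  induction t using Nat.strong_induction_on with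
  | _ t ih =>
    intro h
    rcases Nat.eq_zero_or_pos t with rfl | ht
    · simp
    have hb : t % 3 = 0 ∨ t % 3 = 1 := by
      have := h 0; simp only [pow_zero, Nat.div_one] at this; omega
    have ha : ∀ j, t / 3 / 3 ^ j % 3 ≠ 2 := by
      intro j
      have hd : t / 3 / 3 ^ j = t / 3 ^ (j + 1) := by
        rw [Nat.div_div_eq_div_mul, ← pow_succ']
      rw [hd]; exact h (j + 1)
    have hlt : t / 3 < t := Nat.div_lt_self ht (by norm_num)
    have hrec := ih (t / 3) hlt ha
    have hdig : Nat.digits 3 t = t % 3 :: Nat.digits 3 (t / 3) :=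
      Nat.digits_def' (by norm_num) ht
    rw [lucas3, hdig, List.count_cons]
    rcases hb with hb | hb
    · have h1 : 2 * t % 3 = 0 := by omega
      have h2 : 2 * t / 3 = 2 * (t / 3) := by omega
      rw [h1, hb, h2, hrec]
      norm_num
    · have h1 : 2 * t % 3 = 2 := by omega
      have h2 : 2 * t / 3 = 2 * (t / 3) := by omega
      rw [h1, hb, h2, hrec]
      have hc : ((Nat.choose 2 1 : ℕ) : ZMod 3) = -1 := by decide
      simp only [hc, beq_self_eq_true, if_true, pow_succ]
      ring

/-- `catalan n + choose (2n) (n+1) = choose (2n) n` -/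
lemma catalan_add_choose (n : ℕ) :
    catalan n + (2 * n).choose (n + 1) = (2 * n).choose n := by
  apply Nat.eq_of_mul_eq_mul_left (show 0 < n + 1 by omega)
  have h1 : (n + 1) * catalan n = (2 * n).choose n :=
    succ_mul_catalan_eq_centralBinom n
  have h2 : (2 * n).choose (n + 1) * (n + 1) = (2 * n).choose n * (2 * n - n) :=
    Nat.choose_succ_right_eq (2 * n) n
  have h3 : 2 * n - n = n := by omega
  rw [h3] at h2
  rw [Nat.mul_add, h1]
  nlinarith [h2]

lemma two_mul_choose (q : ℕ) (hq : 0 < q) :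
    2 * (2 * q - 1).choose q = (2 * q).choose q := by
  obtain ⟨p, rfl⟩ : ∃ p, q = p + 1 := ⟨q - 1, by omega⟩
  have h1 : 2 * (p + 1) = (2 * p + 1) + 1 := by ring
  have h2 : 2 * (p + 1) - 1 = 2 * p + 1 := by omega
  have hsymm : (2 * p + 1).choose p = (2 * p + 1).choose (p + 1) := by
    have h3 := Nat.choose_symm (show p + 1 ≤ 2 * p + 1 by omega)
    rw [show 2 * p + 1 - (p + 1) = p from by omega] at h3
    exact h3
  rw [h1, Nat.add_sub_cancel]
  conv_rhs => rw [Nat.choose_succ_succ, hsymm]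
  simp only [Nat.succ_eq_add_one]
  omega

/-- main computation in `ZMod 3` -/
lemma catalan_zmod (n : ℕ) :
    (catalan n : ZMod 3) = ((2 * ((n + 1) / 3)).choose ((n + 1) / 3) : ZMod 3) := by
  set q := (n + 1) / 3 with hq
  have hcat : (catalan n : ZMod 3) =
      ((2 * n).choose n : ZMod 3) - ((2 * n).choose (n + 1) : ZMod 3) := by
    have := catalan_add_choose n
    have : ((catalan n + (2 * n).choose (n + 1) : ℕ) : ZMod 3)
        = (((2 * n).choose n : ℕ) : ZMod 3) := by rw [this]
    push_cast at this
    linear_combination this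
  have hr : (n + 1) % 3 = 0 ∨ (n + 1) % 3 = 1 ∨ (n + 1) % 3 = 2 := by omega
  rcases hr with hr | hr | hr
  · -- n = 3q - 1
    have hq1 : 1 ≤ q := by omega
    have e1 : 2 * n % 3 = 1 := by omega
    have e2 : n % 3 = 2 := by omega
    have e3 : 2 * n / 3 = 2 * q - 1 := by omega
    have e4 : (n + 1) % 3 = 0 := hr
    have e5 : (n + 1) / 3 = q := rfl
    have h2q : ((2 * q - 1).choose q : ZMod 3) = 2 * ((2 * q).choose q : ZMod 3) := by
      have := two_mul_choose q hq1
      have hc : ((2 * (2 * q - 1).choose q : ℕ) : ZMod 3) = (((2 * q).choose q : ℕ) : ZMod 3) := by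
        rw [this]
      push_cast at hc
      have h4 : (2 : ZMod 3) * 2 = 1 := by decide
      calc ((2 * q - 1).choose q : ZMod 3) = 1 * ((2 * q - 1).choose q : ZMod 3) := by ring
        _ = 2 * (2 * ((2 * q - 1).choose q : ZMod 3)) := by rw [← h4]; ring
        _ = 2 * ((2 * q).choose q : ZMod 3) := by rw [hc]
    rw [hcat, lucas3 (2 * n) n, lucas3 (2 * n) (n + 1), e1, e2, e3, e4, h2q]
    norm_num
    linear_combination (-(((2 * q).choose q : ZMod 3))) * (by decide : (3 : ZMod 3) = 0)
  · -- n = 3q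
    have e1 : 2 * n % 3 = 0 := by omega
    have e2 : n % 3 = 0 := by omega
    have e3 : 2 * n / 3 = 2 * q := by omega
    have e4 : (n + 1) % 3 = 1 := hr
    have e5 : n / 3 = q := by omega
    rw [hcat, lucas3 (2 * n) n, lucas3 (2 * n) (n + 1), e1, e2, e3, e4, e5]
    norm_num
  · -- n = 3q + 1
    have e1 : 2 * n % 3 = 2 := by omega
    have e2 : n % 3 = 1 := by omega
    have e3 : 2 * n / 3 = 2 * q := by omega
    have e4 : (n + 1) % 3 = 2 := hr
    have e5 : n / 3 = q := by omega
    rw [hcat, lucas3 (2 * n) n, lucas3 (2 * n) (n + 1), e1, e2, e3, e4, e5]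
    norm_num
    ring

/-- If `n + 1 ∈ T*(01)` then `Cₙ ≡ (−1)^{d₃*(n+1)} (mod 3)`,
otherwise `Cₙ ≡ 0 (mod 3)`. -/
theorem catalan_mod_three (n : ℕ) :
    (n + 1 ∈ Tstar01 → (catalan n : ℤ) ≡ (-1) ^ d3star (n + 1) [ZMOD 3]) ∧
    (n + 1 ∉ Tstar01 → (catalan n : ℤ) ≡ 0 [ZMOD 3]) := by
  set q := (n + 1) / 3 with hq
  have hdig : Nat.digits 3 (n + 1) = (n + 1) % 3 :: Nat.digits 3 q :=
    Nat.digits_def' (by norm_num) (by omega)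
  have hd3 : d3star (n + 1) = (Nat.digits 3 q).count 1 := by
    rw [d3star, hdig, List.drop_one, List.tail_cons]
  have hzq := catalan_zmod n
  have hdiv : ∀ j : ℕ, q / 3 ^ j = (n + 1) / 3 ^ (j + 1) := by
    intro j
    rw [hq, Nat.div_div_eq_div_mul, ← pow_succ']
  constructor
  · intro h
    simp only [Tstar01, Set.mem_setOf_eq] at h
    have hall : ∀ j, q / 3 ^ j % 3 ≠ 2 := by
      intro j
      have hj := h (j + 1) (by omega)
      rw [hdiv j]
      omega
    apply (ZMod.intCast_eq_intCast_iff _ _ 3).mp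
    push_cast
    rw [hzq, hd3]
    exact g_ones q hall
  · intro h
    simp only [Tstar01, Set.mem_setOf_eq] at h
    push_neg at h
    obtain ⟨i, hi1, hi2, hi3⟩ := h
    have hj : q / 3 ^ (i - 1) % 3 = 2 := by
      rw [hdiv (i - 1), show i - 1 + 1 = i from by omega]
      omega
    apply (ZMod.intCast_eq_intCast_iff _ _ 3).mp
    push_cast
    rw [hzq]
    exact g_two (i - 1) q hj
end

section
/- The set of natural numbers n with Cₙ ≡ 0 (mod 3) has asymptotic density 1; that is, the limit as N → ∞ of (1/N)·#{n < N : Cₙ ≡ 0 mod 3} equals 1. -/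
/-!
Since `(n + 1) Cₙ = binom(2n, n)`, Kummer's theorem gives `v_p(Cₙ) = c(n) - v_p(n + 1)`, where
`c(n)` counts the carries of `n + n` in base `p`. The trailing block of digits `p - 1` of `n`
produces exactly `v_p(n + 1)` carries, so `p ∤ Cₙ` forces every carry into that block. For
`n < p ^ (K + 1)` this leaves `n = p ^ (K + 1) - 1`, or a top digit `< p / 2` above an `n mod p ^ K`
of the same kind; so at most `(K + 1) ((p + 1) / 2) ^ K` of the `n < p ^ K` have `p ∤ Cₙ`, a
vanishing proportion.
-/

open Filter Finset

namespace Nat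

/-- `p ^ i ≤ n % p ^ i + n % p ^ i` says that the base-`p` addition `n + n` carries out of digit
`i - 1`; `p ^ i ∣ n + 1` says that the `i` lowest digits of `n` are all `p - 1`. -/
def TrailingCarries (p K n : ℕ) : Prop :=
  ∀ i ≤ K, p ^ i ≤ n % p ^ i + n % p ^ i → p ^ i ∣ n + 1

instance (p K : ℕ) : DecidablePred (TrailingCarries p K) :=
  fun _ => by unfold TrailingCarries; infer_instance

variable {p K n : ℕ}

theorem TrailingCarries.mod_pow (h : TrailingCarries p (K + 1) n) :
    TrailingCarries p K (n % p ^ K) := by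
  intro i hi hcarry
  have hdvd : p ^ i ∣ p ^ K := pow_dvd_pow p hi
  have hmod : n % p ^ K ≡ n [MOD p ^ i] := (mod_modEq n _).of_dvd hdvd
  rw [mod_mod_of_dvd n hdvd] at hcarry
  exact ((hmod.add_right 1).dvd_iff dvd_rfl).2 (h i (by omega) hcarry)

theorem TrailingCarries.eq_or_two_mul_div_lt (h : TrailingCarries p (K + 1) n)
    (hn : n < p ^ (K + 1)) : n + 1 = p ^ (K + 1) ∨ 2 * (n / p ^ K) < p := by
  refine or_iff_not_imp_right.2 fun hdigit => ?_
  have hcarry : p ^ (K + 1) ≤ n % p ^ (K + 1) + n % p ^ (K + 1) := by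
    rw [mod_eq_of_lt hn, pow_succ]
    calc p ^ K * p ≤ p ^ K * (2 * (n / p ^ K)) := Nat.mul_le_mul_left _ (not_lt.1 hdigit)
      _ ≤ n + n := by linarith [div_mul_le_self n (p ^ K)]
  exact ((le_of_dvd n.succ_pos (h _ le_rfl hcarry)).antisymm hn).symm

theorem card_filter_trailingCarries_le (hp : 0 < p) (K : ℕ) :
    #{n ∈ range (p ^ K) | TrailingCarries p K n} ≤ (K + 1) * ((p + 1) / 2) ^ K := by
  induction K with
  | zero => simpa using card_filter_le (range 1) (TrailingCarries p 0)
  | succ K ih =>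
    set c := (p + 1) / 2
    have hsub : {n ∈ range (p ^ (K + 1)) | TrailingCarries p (K + 1) n} ⊆
        insert (p ^ (K + 1) - 1) (({m ∈ range (p ^ K) | TrailingCarries p K m} ×ˢ range c).image
          fun md => md.1 + p ^ K * md.2) := by
      intro n hn
      obtain ⟨hn, h⟩ := mem_filter.1 hn
      rw [mem_range] at hn
      rcases h.eq_or_two_mul_div_lt hn with htop | hdigit
      · exact mem_insert.2 (Or.inl (by omega))
      refine mem_insert_of_mem (mem_image.2 ⟨(n % p ^ K, n / p ^ K), ?_, mod_add_div n _⟩)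
      simp only [mem_product, mem_filter, mem_range]
      exact ⟨⟨mod_lt _ (by positivity), h.mod_pow⟩, by omega⟩
    have hc : 1 ≤ c ^ K * c := by rw [← pow_succ]; exact one_le_pow _ _ (by omega)
    calc _ ≤ _ := card_le_card hsub
      _ ≤ (K + 1) * c ^ K * c + 1 := by
        grw [card_insert_le, Finset.card_image_le, card_product, ih, card_range]
      _ ≤ (K + 1 + 1) * c ^ (K + 1) := by rw [pow_succ]; nlinarith

theorem trailingCarries_of_not_dvd_catalan (hp : p.Prime) (h : ¬ p ∣ catalan n) (K : ℕ) :
    TrailingCarries p K n := by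
  set b := K + n + n + 1
  have hb : n + 1 < p ^ b :=
    (Nat.lt_pow_self hp.one_lt).trans_le (pow_le_pow_right₀ hp.pos (by omega))
  have hcarries : (centralBinom n).factorization p =
      #{i ∈ Ico 1 b | p ^ i ≤ n % p ^ i + n % p ^ i} := by
    rw [centralBinom_eq_two_mul_choose, two_mul]
    exact factorization_choose' hp ((log_le_self p _).trans_lt (by omega))
  have htrailing : (n + 1).factorization p = #{i ∈ Ico 1 b | p ^ i ∣ n + 1} :=
    factorization_eq_card_pow_dvd_of_lt hp n.succ_pos hb
  have hcatalan : catalan n ≠ 0 := by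
    intro h0
    have := succ_mul_catalan_eq_centralBinom n
    simp only [h0, mul_zero] at this
    exact (centralBinom_pos n).ne this
  have hval : (centralBinom n).factorization p = (n + 1).factorization p := by
    rw [← succ_mul_catalan_eq_centralBinom, factorization_mul n.succ_ne_zero hcatalan,
      Finsupp.add_apply, factorization_eq_zero_of_not_dvd h, add_zero]
  have hsub : {i ∈ Ico 1 b | p ^ i ∣ n + 1} ⊆
      {i ∈ Ico 1 b | p ^ i ≤ n % p ^ i + n % p ^ i} := by
    refine monotone_filter_right _ fun i hi hdvd => ?_
    have hpow : 1 < p ^ i := one_lt_pow (by simp at hi; omega) hp.one_lt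
    have hmod : p ^ i ∣ n % p ^ i + 1 := (((mod_modEq n _).add_right 1).dvd_iff dvd_rfl).2 hdvd
    have := le_of_dvd (succ_pos _) hmod
    omega
  have heq := eq_of_subset_of_card_le hsub (by rw [← hcarries, ← htrailing, hval])
  intro i hi hcarry
  rcases i.eq_zero_or_pos with rfl | hi0
  · simp
  have hmem : i ∈ {i ∈ Ico 1 b | p ^ i ≤ n % p ^ i + n % p ^ i} := by
    simp only [mem_filter, mem_Ico]; exact ⟨⟨hi0, by omega⟩, hcarry⟩
  rw [← heq] at hmem
  exact (mem_filter.1 hmem).2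

theorem card_filter_not_dvd_catalan_le (hp : p.Prime) (K : ℕ) :
    #{n ∈ range (p ^ K) | ¬ p ∣ catalan n} ≤ (K + 1) * ((p + 1) / 2) ^ K :=
  (card_le_card (monotone_filter_right _ fun _ _ h =>
    trailingCarries_of_not_dvd_catalan hp h K)).trans (card_filter_trailingCarries_le hp.pos K)

end Nat

open Nat Topology

theorem tendsto_div_of_monotone_of_tendsto_div_pow {b : ℕ} (hb : 1 < b) {f : ℕ → ℕ}
    (hf : Monotone f) (h : Tendsto (fun K => (f (b ^ K) : ℝ) / b ^ K) atTop (𝓝 0)) :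
    Tendsto (fun N => (f N : ℝ) / N) atTop (𝓝 0) := by
  have hlog : Tendsto (fun N => log b N + 1) atTop atTop :=
    (tendsto_add_atTop_nat 1).comp
      (log_monotone.tendsto_atTop_atTop fun K => ⟨b ^ K, (log_pow hb K).ge⟩)
  refine squeeze_zero' (.of_forall fun N => by positivity) ?_
    (by simpa using (h.comp hlog).const_mul (b : ℝ))
  filter_upwards [eventually_ne_atTop 0] with N hN
  set L := log b N
  have hfN : (f N : ℝ) ≤ f (b ^ (L + 1)) := by exact_mod_cast hf (lt_pow_succ_log_self hb N).le
  have hN : ((b ^ L : ℕ) : ℝ) ≤ N := by exact_mod_cast pow_log_le_self b hN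
  have hb0 : (0 : ℝ) < b := by exact_mod_cast (zero_lt_one.trans hb)
  calc (f N : ℝ) / N ≤ f (b ^ (L + 1)) / (b ^ L : ℕ) := by gcongr
    _ = b * (f (b ^ (L + 1)) / b ^ (L + 1)) := by
      push_cast; rw [pow_succ (b : ℝ)]; field_simp

theorem tendsto_card_filter_not_dvd_catalan_div {p : ℕ} (hp : p.Prime) :
    Tendsto (fun N => (#{n ∈ range N | ¬ p ∣ catalan n} : ℝ) / N) atTop (𝓝 0) := by
  refine tendsto_div_of_monotone_of_tendsto_div_pow hp.one_lt
    (fun M N hMN => card_le_card (filter_subset_filter _ (range_subset_range.2 hMN))) ?_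
  set r : ℝ := ((p + 1) / 2 : ℕ) / p
  have hp0 : (0 : ℝ) < p := by exact_mod_cast hp.pos
  have hr0 : 0 ≤ r := by positivity
  have hr1 : r < 1 := by
    rw [div_lt_one hp0]
    exact_mod_cast (show (p + 1) / 2 < p by have := hp.two_le; omega)
  have hbound : Tendsto (fun K : ℕ => K * r ^ K + r ^ K) atTop (𝓝 0) := by
    simpa using (tendsto_self_mul_const_pow_of_lt_one hr0 hr1).add
      (tendsto_pow_atTop_nhds_zero_of_lt_one hr0 hr1)
  refine squeeze_zero (fun _ => by positivity) (fun K => ?_) hbound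
  calc (#{n ∈ range (p ^ K) | ¬ p ∣ catalan n} : ℝ) / (p : ℝ) ^ K
      ≤ ((K + 1) * ((p + 1) / 2) ^ K : ℕ) / (p : ℝ) ^ K := by
        gcongr; exact_mod_cast card_filter_not_dvd_catalan_le hp K
    _ = K * r ^ K + r ^ K := by push_cast; rw [div_pow]; ring

theorem tendsto_card_filter_dvd_catalan_div {p : ℕ} (hp : p.Prime) :
    Tendsto (fun N => (#{n ∈ range N | p ∣ catalan n} : ℝ) / N) atTop (𝓝 1) := by
  have hgood := (tendsto_card_filter_not_dvd_catalan_div hp).const_sub 1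
  rw [sub_zero] at hgood
  refine hgood.congr' ?_
  filter_upwards [eventually_ne_atTop 0] with N hN
  have hsplit :
      (#{n ∈ range N | p ∣ catalan n} : ℝ) + #{n ∈ range N | ¬ p ∣ catalan n} = N := by
    exact_mod_cast (card_range N) ▸ card_filter_add_card_filter_not _
  rw [eq_div_iff (by exact_mod_cast hN), sub_mul, div_mul_cancel₀ _ (by exact_mod_cast hN)]
  linarith

/-- The set of `n` with `Cₙ ≡ 0 (mod 3)` has asymptotic density 1. -/
theorem catalan_modEq_zero_three_density_one :
    Tendsto (fun N : ℕ => ({n : ℕ | n < N ∧ catalan n ≡ 0 [MOD 3]}.ncard : ℝ) / N)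
      atTop (nhds 1) := by
  convert tendsto_card_filter_dvd_catalan_div prime_three using 3 with N
  rw [← Set.ncard_coe_finset]
  congr 2
  ext n
  simp [modEq_zero_iff_dvd]
end

section
/- The set of natural numbers n such that the Catalan number Cₙ is NOT divisible by 3 has asymptotic density 0; that is, the limit as N → ∞ of (1/N)·#{n < N : Cₙ ≢ 0 mod 3} equals 0. -/
/-!
By Kummer's theorem `v_p (centralBinom n)` is the number of carries in the base-`p` addition
`n + n`, and every digit `d` of `n` with `2 d ≥ p` produces a carry. Since
`(n + 1) * catalan n = centralBinom n`, if `p ∤ catalan n` there are exactly `v_p (n + 1)`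
carries, and these are already produced by the `v_p (n + 1)` trailing digits `p - 1` of `n`.
Hence above the trailing block all digits are `< (p + 1) / 2`, so at most
`(k + 1) ((p + 1) / 2) ^ k` of the `n < p ^ k` have `p ∤ catalan n`; for `p = 3` this is
`(k + 1) 2 ^ k = o(3 ^ k)`.
-/

open Filter Finset Topology

theorem Nat.mod_eq_sub_one_of_dvd_add_one {m n : ℕ} (h : m ∣ n + 1) : n % m = m - 1 := by
  obtain ⟨c, hc⟩ := h
  obtain ⟨c, rfl⟩ : ∃ c', c = c' + 1 :=
    Nat.exists_eq_succ_of_ne_zero (by rintro rfl; simp at hc)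
  have hm : 0 < m := Nat.pos_of_ne_zero (by rintro rfl; simp at hc)
  have hn : n = m * c + (m - 1) := by rw [Nat.mul_succ] at hc; omega
  rw [hn, Nat.mul_add_mod, Nat.mod_eq_of_lt (by omega)]

theorem Nat.div_pow_mod_eq_sub_one_of_pow_dvd {b n t j : ℕ} (h : b ^ t ∣ n + 1) (hj : j < t) :
    n / b ^ j % b = b - 1 := by
  have hmod := Nat.mod_eq_sub_one_of_dvd_add_one ((pow_dvd_pow b hj).trans h)
  have hb : 0 < b := Nat.pos_of_ne_zero (by rintro rfl; simp [zero_pow (by omega : t ≠ 0)] at h)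
  have hbj : 0 < b ^ j := by positivity
  rw [← Nat.mod_mul_right_div_self, ← pow_succ, hmod, pow_succ]
  obtain ⟨c, rfl⟩ : ∃ c, b = c + 1 := Nat.exists_eq_succ_of_ne_zero hb.ne'
  generalize (c + 1) ^ j = x at hbj ⊢
  apply Nat.div_eq_of_lt_le <;> simp only [Nat.add_sub_cancel, Nat.mul_add_one, Nat.add_one_mul,
    Nat.mul_comm x c] <;> omega

theorem Nat.pow_succ_le_mod_add_mod_of_le_two_mul_digit {p n i : ℕ}
    (hd : p ≤ 2 * (n / p ^ i % p)) : p ^ (i + 1) ≤ n % p ^ (i + 1) + n % p ^ (i + 1) := by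
  rw [Nat.mod_pow_succ, pow_succ]
  nlinarith [Nat.zero_le (n % p ^ i), Nat.zero_le (p ^ i)]

theorem lt_padicValNat_add_one_of_not_dvd_catalan {p n i : ℕ} [hp : Fact p.Prime]
    (hC : ¬ p ∣ catalan n) (hd : p ≤ 2 * (n / p ^ i % p)) : i < padicValNat p (n + 1) := by
  set v := padicValNat p (n + 1)
  set T : Finset ℕ := {j ∈ Ico 1 (Nat.log p (n + n) + 1) | p ^ j ≤ n % p ^ j + n % p ^ j}
  have hcarries : padicValNat p n.centralBinom = #T := by
    rw [Nat.centralBinom, two_mul]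
    exact padicValNat_choose' (lt_add_one _)
  have hval : padicValNat p n.centralBinom = v := by
    rw [← succ_mul_catalan_eq_centralBinom, padicValNat.mul n.succ_ne_zero
      (fun h ↦ hC (by simp [h])), padicValNat.eq_zero_of_not_dvd hC, add_zero]
  by_contra! hvi
  have hmaps : ∀ j ∈ insert i (range v), j + 1 ∈ T := by
    intro j hj
    have hdj : p ≤ 2 * (n / p ^ j % p) := by
      rcases mem_insert.1 hj with rfl | hj
      · exact hd
      · rw [Nat.div_pow_mod_eq_sub_one_of_pow_dvd pow_padicValNat_dvd (mem_range.1 hj)]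
        have := hp.out.two_le
        omega
    have hcarry := Nat.pow_succ_le_mod_add_mod_of_le_two_mul_digit hdj
    have hlog : j + 1 ≤ Nat.log p (n + n) :=
      Nat.le_log_of_pow_le hp.out.one_lt (hcarry.trans (by gcongr <;> exact Nat.mod_le _ _))
    simp only [T, mem_filter, mem_Ico]
    exact ⟨⟨by omega, by omega⟩, hcarry⟩
  have := card_le_card_of_injOn (· + 1) hmaps (fun _ _ _ _ h ↦ by simpa using h)
  rw [card_insert_of_notMem (by simpa using hvi), card_range, ← hcarries, hval] at this
  omega

def boundedDigits (b d k : ℕ) : Finset ℕ := {n ∈ range (b ^ k) | ∀ i < k, n / b ^ i % b < d}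

theorem card_boundedDigits_le {b : ℕ} (hb : 0 < b) (d : ℕ) :
    ∀ k, #(boundedDigits b d k) ≤ d ^ k
  | 0 => (card_filter_le (range 1) _).trans_eq (by simp)
  | k + 1 => by
    have hmaps : ∀ n ∈ boundedDigits b d (k + 1),
        (n % b, n / b) ∈ range d ×ˢ boundedDigits b d k := by
      intro n hn
      simp only [boundedDigits, mem_filter, mem_range, mem_product] at hn ⊢
      refine ⟨by simpa using hn.2 0 (by omega), ?_, fun i hi ↦ ?_⟩
      · rw [Nat.div_lt_iff_lt_mul hb, ← pow_succ]
        exact hn.1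
      · rw [Nat.div_div_eq_div_mul, ← pow_succ']
        exact hn.2 (i + 1) (by omega)
    have hinj : Set.InjOn (fun n ↦ (n % b, n / b)) (boundedDigits b d (k + 1)) :=
      fun m _ n _ h ↦ by
        simp only [Prod.mk.injEq] at h
        rw [← Nat.div_add_mod m b, ← Nat.div_add_mod n b, h.1, h.2]
    calc _ ≤ #(range d ×ˢ boundedDigits b d k) := card_le_card_of_injOn _ hmaps hinj
      _ ≤ d ^ (k + 1) := by
          rw [card_product, card_range, pow_succ']
          exact Nat.mul_le_mul_left d (card_boundedDigits_le hb d k)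

theorem card_filter_not_dvd_catalan_le (p : ℕ) [hp : Fact p.Prime] (k : ℕ) :
    #{n ∈ range (p ^ k) | ¬ p ∣ catalan n} ≤ (k + 1) * ((p + 1) / 2) ^ k := by
  have hsub : {n ∈ range (p ^ k) | ¬ p ∣ catalan n} ⊆
      (range (k + 1) ×ˢ boundedDigits p ((p + 1) / 2) k).image
        fun tq ↦ p ^ tq.1 * tq.2 + (p ^ tq.1 - 1) := by
    intro n hn
    simp only [mem_filter, mem_range] at hn
    set t := padicValNat p (n + 1)
    have hpt : 0 < p ^ t := pow_pos hp.out.pos t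
    have htk : t ≤ k := (Nat.pow_le_pow_iff_right hp.out.one_lt).1
      ((Nat.le_of_dvd n.succ_pos pow_padicValNat_dvd).trans hn.1)
    refine mem_image.2 ⟨(t, n / p ^ t), mem_product.2 ⟨mem_range.2 (by omega), ?_⟩, ?_⟩
    · simp only [boundedDigits, mem_filter, mem_range]
      refine ⟨(Nat.div_le_self n _).trans_lt hn.1, fun i _ ↦ ?_⟩
      rw [Nat.div_div_eq_div_mul, ← pow_add]
      by_contra! hd
      have := lt_padicValNat_add_one_of_not_dvd_catalan hn.2 (i := t + i) (by omega)
      omega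
    · rw [← Nat.mod_eq_sub_one_of_dvd_add_one pow_padicValNat_dvd]
      exact Nat.div_add_mod n _
  calc _ ≤ #(range (k + 1) ×ˢ boundedDigits p ((p + 1) / 2) k) :=
        (card_le_card hsub).trans card_image_le
    _ ≤ (k + 1) * ((p + 1) / 2) ^ k := by
        rw [card_product, card_range]
        exact Nat.mul_le_mul_left _ (card_boundedDigits_le hp.out.pos _ k)

theorem tendsto_card_filter_range_div_of_card_le {P : ℕ → Prop} [DecidablePred P] {b c : ℕ}
    (hb : 1 < b) (hcb : c < b) (h : ∀ k, #{n ∈ range (b ^ k) | P n} ≤ (k + 1) * c ^ k) :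
    Tendsto (fun N : ℕ ↦ (#{n ∈ range N | P n} : ℝ) / N) atTop (𝓝 0) := by
  set r : ℝ := c / b
  have hb0 : (0 : ℝ) < b := by positivity
  have hr0 : 0 ≤ r := by positivity
  have hr1 : r < 1 := (div_lt_one hb0).2 (by exact_mod_cast hcb)
  have hbound : Tendsto (fun k : ℕ ↦ b * ((k + 1) * r ^ k)) atTop (𝓝 0) := by
    have := (tendsto_self_mul_const_pow_of_lt_one hr0 hr1).add
      (tendsto_pow_atTop_nhds_zero_of_lt_one hr0 hr1)
    simpa [add_mul] using this.const_mul (b : ℝ)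
  have hlog : Tendsto (fun N ↦ Nat.log b N + 1) atTop atTop :=
    (tendsto_add_atTop_nat 1).comp (tendsto_atTop_atTop.2 fun m ↦
      ⟨b ^ m, fun _ hN ↦ Nat.le_log_of_pow_le hb hN⟩)
  refine tendsto_of_tendsto_of_tendsto_of_le_of_le' tendsto_const_nhds (hbound.comp hlog)
    (Eventually.of_forall fun N ↦ by positivity) ?_
  filter_upwards [eventually_ne_atTop 0] with N hN
  set k := Nat.log b N + 1
  have hcount : (#{n ∈ range N | P n} : ℝ) ≤ (k + 1) * c ^ k := by
    have hNk : N ≤ b ^ k := (Nat.lt_pow_succ_log_self hb N).le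
    exact_mod_cast (card_le_card (filter_subset_filter _ (range_subset_range.2 hNk))).trans (h k)
  have hpow : (b : ℝ) ^ k ≤ b * N := by
    rw [pow_succ']
    exact_mod_cast Nat.mul_le_mul_left b (Nat.pow_log_le_self b hN)
  rw [Function.comp_apply, div_le_iff₀ (by positivity), div_pow]
  calc (#{n ∈ range N | P n} : ℝ) ≤ (k + 1) * c ^ k := hcount
    _ = (k + 1) * c ^ k / b ^ k * b ^ k := by field_simp
    _ ≤ (k + 1) * c ^ k / b ^ k * (b * N) := by gcongr
    _ = b * ((k + 1) * (c ^ k / b ^ k)) * N := by ring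

/-- The set of `n` with `Cₙ ≢ 0 (mod 3)` has asymptotic density 0. -/
theorem catalan_not_modEq_zero_three_density_zero :
    Tendsto (fun N : ℕ => ({n : ℕ | n < N ∧ ¬ catalan n ≡ 0 [MOD 3]}.ncard : ℝ) / N)
      atTop (nhds 0) := by
  have hset : ∀ N, {n : ℕ | n < N ∧ ¬ catalan n ≡ 0 [MOD 3]}.ncard
      = #{n ∈ range N | ¬ 3 ∣ catalan n} := fun N ↦ by
    rw [← Set.ncard_coe_finset]
    congr
    ext n
    simp [Nat.modEq_zero_iff_dvd]
  simp_rw [hset]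
  exact tendsto_card_filter_range_div_of_card_le (by norm_num) (by norm_num : 2 < 3)
    (card_filter_not_dvd_catalan_le 3)
end
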